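/- For every d ≥ 1, in the Mockingbird lattice M(d), every saturated chain from the least element r_d to the greatest element has at least d and at most 2^{d−1} elements, and both bounds are attained: some saturated chain from r_d to the greatest element has exactly d elements and some has exactly 2^{d−1} elements. -/

import Mathlib

/-- Mockingbird terms: the constant `M`, variables `x i`, and applications. -/
inductive MTerm : Type
  | M : MTerm
  | var : ℕ → MTerm
  | app : MTerm → MTerm → MTerm
  deriving DecidableEq

/-- The one-step rewrite relation `⇒` on Mockingbird terms. -/
inductive Step : MTerm → MTerm → Prop
  | mock (t : MTerm) : Step (MTerm.app MTerm.M t) (MTerm.app t t)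
  | left {t1 t1' : MTerm} (t2 : MTerm) :
      Step t1 t1' → Step (MTerm.app t1 t2) (MTerm.app t1' t2)
  | right (t1 : MTerm) {t2 t2' : MTerm} :
      Step t2 t2' → Step (MTerm.app t1 t2) (MTerm.app t1 t2')

/-- `≼`, the reflexive-transitive closure of `⇒`. -/
def MLe : MTerm → MTerm → Prop := Relation.ReflTransGen Step

/-- `≡`, the reflexive-symmetric-transitive closure of `⇒`. -/
def MEquiv : MTerm → MTerm → Prop := Relation.EqvGen Step

/-- Strict version of `≼`. -/
def MLt (s t : MTerm) : Prop := MLe s t ∧ s ≠ t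

/-- Covering relation for `≼`. -/
def MCovBy (s t : MTerm) : Prop := MLt s t ∧ ∀ z, MLt s z → ¬ MLt z t

/-- Duplicative trees: white or black nodes with a list (forest) of children. -/
inductive DTree : Type
  | W : List DTree → DTree
  | B : List DTree → DTree

/-- The one-step relation `⋖` on duplicative forests. -/
inductive DStep : List DTree → List DTree → Prop
  | dup (g : List DTree) : DStep [DTree.W g] [DTree.B (g ++ g)]
  | white {g g' : List DTree} : DStep g g' → DStep [DTree.W g] [DTree.W g']
  | black {g g' : List DTree} : DStep g g' → DStep [DTree.B g] [DTree.B g']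
  | head {t t' : DTree} (f : List DTree) : DStep [t] [t'] → DStep (t :: f) (t' :: f)
  | tail (t : DTree) {f f' : List DTree} : DStep f f' → DStep (t :: f) (t :: f')

/-- `≪`, the reflexive-transitive closure of `⋖`. -/
def DLe : List DTree → List DTree → Prop := Relation.ReflTransGen DStep

/-- The map `fr` from Mockingbird terms to duplicative forests. -/
def fr : MTerm → List DTree
  | MTerm.M => []
  | MTerm.var _ => []
  | MTerm.app MTerm.M MTerm.M => [DTree.B []]
  | MTerm.app MTerm.M t' => [DTree.W (fr t')]
  | MTerm.app t t' => [DTree.B (fr t ++ fr t')]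

mutual
  /-- The pruning map on duplicative trees (returns a forest). -/
  def prT : DTree → List DTree
    | DTree.W g => [DTree.W (prF g)]
    | DTree.B g => prF g
  /-- The pruning map on duplicative forests. -/
  def prF : List DTree → List DTree
    | [] => []
    | t :: f => prT t ++ prF f
end

mutual
  /-- The statistic `mtStat` on duplicative trees. -/
  def mtStat : DTree → ℕ
    | DTree.W g => 2 * ml g
    | DTree.B g => ml g
  /-- Sum of `mtStat` over the trees of a forest. -/
  def mtsum : List DTree → ℕ
    | [] => 0
    | t :: f => mtStat t + mtsum f
  /-- The statistic `ml` on duplicative forests: `1 - ℓ + Σ mtStat`. -/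
  def ml : List DTree → ℕ
    | f => mtsum f + 1 - f.length
end

mutual
  /-- Number of white nodes in a duplicative tree. -/
  def whitesT : DTree → ℕ
    | DTree.W g => 1 + whitesF g
    | DTree.B g => whitesF g
  /-- Number of white nodes in a duplicative forest. -/
  def whitesF : List DTree → ℕ
    | [] => 0
    | t :: f => whitesT t + whitesF f
end

/-- Closed terms: no variables. -/
def MClosed : MTerm → Prop
  | MTerm.M => True
  | MTerm.var _ => False
  | MTerm.app a b => MClosed a ∧ MClosed b

/-- Degree: number of applications. -/
def deg : MTerm → ℕ
  | MTerm.M => 0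
  | MTerm.var _ => 0
  | MTerm.app a b => deg a + deg b + 1

/-- Subterm relation. -/
inductive Subterm : MTerm → MTerm → Prop
  | refl (t : MTerm) : Subterm t t
  | left {s a : MTerm} (b : MTerm) : Subterm s a → Subterm s (MTerm.app a b)
  | right (a : MTerm) {s b : MTerm} : Subterm s b → Subterm s (MTerm.app a b)

/-- The term `r_d`. -/
def rTerm : ℕ → MTerm
  | 0 => MTerm.M
  | d + 1 => MTerm.app MTerm.M (rTerm d)

/-- Saturated chain from `a` to `b`, given as the list of its elements. -/
def SatChain (a b : MTerm) (c : List MTerm) : Prop :=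
  List.Chain' MCovBy c ∧ c.head? = some a ∧ c.getLast? = some b
namespace MB
open MTerm

/-- `t` is an application. -/
def IsApp : MTerm → Prop
  | .app _ _ => True
  | _ => False

lemma isApp_app (a b : MTerm) : IsApp (.app a b) := trivial

lemma not_step_M {t : MTerm} : ¬ Step .M t := fun h => nomatch h

lemma not_step_var {i : ℕ} {t : MTerm} : ¬ Step (.var i) t := fun h => nomatch h

lemma step_tgt_isApp {s t : MTerm} (h : Step s t) : IsApp t := by
  cases h <;> exact trivial

lemma step_src_isApp {s t : MTerm} (h : Step s t) : IsApp s := by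
  cases h <;> exact trivial

lemma mle_M_eq {t : MTerm} (h : MLe .M t) : t = .M := by
  induction h with
  | refl => rfl
  | tail _ h ih => subst ih; exact absurd h not_step_M

lemma mle_isApp {s t : MTerm} (h : MLe s t) (hs : IsApp s) : IsApp t := by
  induction h with
  | refl => exact hs
  | tail _ h ih => exact step_tgt_isApp h

lemma step_closed {s t : MTerm} (h : Step s t) (hs : MClosed s) : MClosed t := by
  induction h with
  | mock t => exact ⟨hs.2, hs.2⟩
  | left _ _ ih => exact ⟨ih hs.1, hs.2⟩
  | right _ _ ih => exact ⟨hs.1, ih hs.2⟩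

lemma mle_closed {s t : MTerm} (h : MLe s t) (hs : MClosed s) : MClosed t := by
  induction h with
  | refl => exact hs
  | tail _ h ih => exact step_closed h ih

lemma mle_app_left {a a' : MTerm} (b : MTerm) (h : MLe a a') :
    MLe (.app a b) (.app a' b) :=
  Relation.ReflTransGen.lift (fun x => MTerm.app x b) (fun _ _ h => Step.left b h) _ _ h

lemma mle_app_right (a : MTerm) {b b' : MTerm} (h : MLe b b') :
    MLe (.app a b) (.app a b') :=
  Relation.ReflTransGen.lift (fun x => MTerm.app a x) (fun _ _ h => Step.right a h) _ _ h

lemma mle_app_app {a a' b b' : MTerm} (h1 : MLe a a') (h2 : MLe b b') :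
    MLe (.app a b) (.app a' b') :=
  Relation.ReflTransGen.trans (mle_app_left b h1) (mle_app_right a' h2)

/-- weight for antisymmetry -/
def wt : MTerm → ℕ
  | .M => 2
  | .var _ => 2
  | .app a b => wt a * wt b

lemma wt_pos {t : MTerm} : 2 ≤ wt t := by
  induction t with
  | M => exact le_refl _
  | var _ => exact le_refl _
  | app a b iha ihb => calc 2 ≤ 2 * 2 := by norm_num
                            _ ≤ wt a * wt b := Nat.mul_le_mul iha ihb

/-- number of `M`s -/
def mcount : MTerm → ℕ
  | .M => 1
  | .var _ => 0
  | .app a b => mcount a + mcount b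

lemma step_wt {s t : MTerm} (h : Step s t) : wt s ≤ wt t := by
  induction h with
  | mock u => exact Nat.mul_le_mul_right (wt u) wt_pos
  | left b _ ih => exact Nat.mul_le_mul_right (wt b) ih
  | right a _ ih => exact Nat.mul_le_mul_left (wt a) ih

lemma mle_wt {s t : MTerm} (h : MLe s t) : wt s ≤ wt t := by
  induction h with
  | refl => exact le_refl _
  | tail _ h ih => exact le_trans ih (step_wt h)

lemma step_eq_or_mcount {s t : MTerm} (h : Step s t) (hw : wt t ≤ wt s) :
    s = t ∨ mcount t < mcount s := by
  induction h with
  | mock u =>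
    simp only [wt] at hw
    have hu : 2 ≤ wt u := wt_pos
    have h2 : wt u = 2 := by nlinarith
    cases u with
    | M => exact Or.inl rfl
    | var i => right; simp [mcount]
    | app a b =>
      exfalso
      have ha : 2 ≤ wt a := wt_pos
      have hb : 2 ≤ wt b := wt_pos
      simp only [wt] at h2
      nlinarith
  | left b hs ih =>
    simp only [wt] at hw
    have hb : 0 < wt b := lt_of_lt_of_le (by norm_num) wt_pos
    have := Nat.le_of_mul_le_mul_right hw hb
    rcases ih this with h | h
    · left; rw [h]
    · right; simp only [mcount]; omega
  | right a hs ih =>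
    simp only [wt] at hw
    have ha : 0 < wt a := lt_of_lt_of_le (by norm_num) wt_pos
    have hw' : wt a * _ ≤ wt a * _ := hw
    have := Nat.le_of_mul_le_mul_left hw ha
    rcases ih this with h | h
    · left; rw [h]
    · right; simp only [mcount]; omega

lemma mle_eq_or_mcount {s t : MTerm} (h : MLe s t) (hw : wt t ≤ wt s) :
    s = t ∨ mcount t < mcount s := by
  induction h using Relation.ReflTransGen.head_induction_on with
  | refl => exact Or.inl rfl
  | @head s u hsu hut ih =>
    have h1 : wt s ≤ wt u := step_wt hsu
    have h2 : wt u ≤ wt t := mle_wt hut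
    rcases step_eq_or_mcount hsu (le_trans h2 hw) with he | hlt
    · rcases ih (by omega) with he2 | h2 
      · exact Or.inl (he.trans he2)
      · right; rw [he]; exact h2
    · rcases ih (by omega) with he2 | h2
      · right; rw [← he2]; exact hlt
      · right; omega

lemma mle_antisymm {s t : MTerm} (h1 : MLe s t) (h2 : MLe t s) : s = t := by
  have w1 := mle_wt h1
  have w2 := mle_wt h2
  rcases mle_eq_or_mcount h1 (by omega) with he | hc1
  · exact he
  rcases mle_eq_or_mcount h2 (by omega) with he | hc2
  · exact he.symm
  · omega

end MB
namespace MB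
open MTerm

/-- L2: reductions from an application with application head stay componentwise. -/
lemma mle_app_inv {s t : MTerm} (h : MLe s t) :
    ∀ a b, s = .app a b → IsApp a →
    ∃ a' b', t = .app a' b' ∧ MLe a a' ∧ MLe b b' := by
  induction h using Relation.ReflTransGen.head_induction_on with
  | refl =>
    intro a b hs ha
    exact ⟨a, b, hs, Relation.ReflTransGen.refl, Relation.ReflTransGen.refl⟩
  | @head s u hsu hut ih =>
    intro a b hs ha
    subst hs
    cases hsu with
    | mock => exact absurd ha (by exact id)
    | @left a1 a1' _ h1 =>
      obtain ⟨a', b', ht, h2, h3⟩ := ih a1' b rfl (step_tgt_isApp h1)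
      exact ⟨a', b', ht, Relation.ReflTransGen.head h1 h2, h3⟩
    | @right _ b1 b1' h1 =>
      obtain ⟨a', b', ht, h2, h3⟩ := ih a b1' rfl ha
      exact ⟨a', b', ht, h2, Relation.ReflTransGen.head h1 h3⟩

/-- L3: reductions from `M ⋆ s` with `s` an application. -/
lemma mle_Mapp_inv {s0 t : MTerm} (h : MLe s0 t) :
    ∀ s, s0 = .app .M s → IsApp s →
    (∃ s', t = .app .M s' ∧ MLe s s') ∨
    (∃ a b, t = .app a b ∧ IsApp a ∧ MLe s a ∧ MLe s b) := by
  induction h using Relation.ReflTransGen.head_induction_on with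
  | refl =>
    intro s hs ha
    exact Or.inl ⟨s, hs, Relation.ReflTransGen.refl⟩
  | @head s0 u hsu hut ih =>
    intro s hs ha
    subst hs
    cases hsu with
    | mock =>
      obtain ⟨a', b', ht, h2, h3⟩ := mle_app_inv hut s s rfl ha
      exact Or.inr ⟨a', b', ht, mle_isApp h2 ha, h2, h3⟩
    | left _ h1 => exact absurd h1 not_step_M
    | @right _ _ s2 h1 =>
      rcases ih s2 rfl (step_tgt_isApp h1) with ⟨s', ht, h2⟩ | ⟨a, b, ht, hia, h2, h3⟩
      · exact Or.inl ⟨s', ht, Relation.ReflTransGen.head h1 h2⟩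
      · exact Or.inr ⟨a, b, ht, hia, Relation.ReflTransGen.head h1 h2,
          Relation.ReflTransGen.head h1 h3⟩

/-- Reductions from `M ⋆ M` go nowhere. -/
lemma mle_MM_eq {t : MTerm} (h : MLe (.app .M .M) t) : t = .app .M .M := by
  induction h with
  | refl => rfl
  | tail _ h ih =>
    subst ih
    cases h with
    | mock => rfl
    | left _ h1 => exact absurd h1 not_step_M
    | right _ h1 => exact absurd h1 not_step_M

end MB
namespace MB
open MTerm

lemma not_mlt_M {q : MTerm} : ¬ MLt .M q := by
  rintro ⟨h1, h2⟩; exact h2 (mle_M_eq h1).symm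

lemma isApp_of_mlt_closed {p q : MTerm} (hc : MClosed p) (h : MLt p q) : IsApp p := by
  cases p with
  | M => exact absurd h not_mlt_M
  | var i => exact hc.elim
  | app a b => exact trivial

/-- Covers lift through `M ⋆ ·`. -/
lemma ccov_Mapp {s s' : MTerm} (hc : MClosed s) (h : MCovBy s s') :
    MCovBy (.app .M s) (.app .M s') := by
  have hs : IsApp s := isApp_of_mlt_closed hc h.1
  obtain ⟨⟨hle, hne⟩, hcov⟩ := h
  refine ⟨⟨mle_app_right _ hle, fun he => hne (by injection he)⟩, ?_⟩
  rintro z ⟨hz1, hz2⟩ ⟨hz3, hz4⟩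
  rcases mle_Mapp_inv hz1 s rfl hs with ⟨s2, rfl, h2⟩ | ⟨a, b, rfl, hia, h2, h3⟩
  · have hs2 : IsApp s2 := mle_isApp h2 hs
    rcases mle_Mapp_inv hz3 s2 rfl hs2 with ⟨s3, he, h4⟩ | ⟨a, b, he, hia, h4, h5⟩
    · injection he with e1 e2; subst e2
      exact hcov s2 ⟨h2, fun he => hz2 (by rw [he])⟩
        ⟨h4, fun he => hz4 (by rw [he])⟩
    · injection he with e1 e2; subst e1; exact hia
  · obtain ⟨a', b', he, h4, h5⟩ := mle_app_inv hz3 a b rfl hia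
    injection he with e1 e2; subst e1
    exact mle_isApp h4 hia

/-- The duplication cover `M ⋆ s ⋖ s ⋆ s`. -/
lemma ccov_dup {s : MTerm} (hs : IsApp s) : MCovBy (.app .M s) (.app s s) := by
  have hMne : MTerm.M ≠ s := by rintro rfl; exact hs
  refine ⟨⟨Relation.ReflTransGen.single (Step.mock s),
    fun he => hMne (by injection he)⟩, ?_⟩
  rintro z ⟨hz1, hz2⟩ ⟨hz3, hz4⟩
  rcases mle_Mapp_inv hz1 s rfl hs with ⟨s2, rfl, h2⟩ | ⟨a, b, rfl, hia, h2, h3⟩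
  · have hs2 : IsApp s2 := mle_isApp h2 hs
    rcases mle_Mapp_inv hz3 s2 rfl hs2 with ⟨s3, he, h4⟩ | ⟨a, b, he, hia2, h4, h5⟩
    · injection he with e1 e2; exact hMne e1.symm
    · injection he with e1 e2; subst e1; subst e2
      exact hz2 (by rw [mle_antisymm h2 h4])
  · obtain ⟨a', b', he, h4, h5⟩ := mle_app_inv hz3 a b rfl hia
    injection he with e1 e2; subst e1; subst e2
    have e3 : a = s := mle_antisymm h4 h2
    have e4 : b = s := mle_antisymm h5 h3
    subst e3; subst e4; exact hz4 rfl

/-- Covers lift through `· ⋆ b`. -/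
lemma ccov_left {a a' : MTerm} (hc : MClosed a) (h : MCovBy a a') (b : MTerm) :
    MCovBy (.app a b) (.app a' b) := by
  have ha : IsApp a := isApp_of_mlt_closed hc h.1
  obtain ⟨⟨hle, hne⟩, hcov⟩ := h
  refine ⟨⟨mle_app_left _ hle, fun he => hne (by injection he)⟩, ?_⟩
  rintro z ⟨hz1, hz2⟩ ⟨hz3, hz4⟩
  obtain ⟨a2, b2, rfl, h2, h3⟩ := mle_app_inv hz1 a b rfl ha
  obtain ⟨a3, b3, he, h4, h5⟩ := mle_app_inv hz3 a2 b2 rfl (mle_isApp h2 ha)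
  injection he with e1 e2; subst e1; subst e2
  have hb2 : b2 = b := mle_antisymm h5 h3
  subst hb2
  exact hcov a2 ⟨h2, fun he => hz2 (by rw [he])⟩ ⟨h4, fun he => hz4 (by rw [he])⟩

/-- Covers lift through `a ⋆ ·`. -/
lemma ccov_right {a b b' : MTerm} (hca : MClosed a) (hcb : MClosed b)
    (h : MCovBy b b') : MCovBy (.app a b) (.app a b') := by
  cases a with
  | var i => exact hca.elim
  | M => exact ccov_Mapp hcb h
  | app a1 a1' =>
    obtain ⟨⟨hle, hne⟩, hcov⟩ := h
    refine ⟨⟨mle_app_right _ hle, fun he => hne (by injection he)⟩, ?_⟩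
    rintro z ⟨hz1, hz2⟩ ⟨hz3, hz4⟩
    obtain ⟨a2, b2, rfl, h2, h3⟩ := mle_app_inv hz1 _ b rfl trivial
    obtain ⟨a3, b3, he, h4, h5⟩ := mle_app_inv hz3 a2 b2 rfl (mle_isApp h2 trivial)
    injection he with e1 e2; subst e1; subst e2
    have ha2 : a2 = MTerm.app a1 a1' := mle_antisymm h4 h2
    subst ha2
    exact hcov b2 ⟨h3, fun he => hz2 (by rw [he])⟩ ⟨h5, fun he => hz4 (by rw [he])⟩

end MB
namespace MB
open MTerm

/-- Inversion of covers starting from a closed term. -/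
lemma mcovby_inv {p q : MTerm} (hc : MClosed p) (h : MCovBy p q) :
    (∃ s s', p = .app .M s ∧ q = .app .M s' ∧ IsApp s ∧ MCovBy s s') ∨
    (∃ s, p = .app .M s ∧ q = .app s s ∧ IsApp s) ∨
    (∃ a a' b, p = .app a b ∧ q = .app a' b ∧ IsApp a ∧ MCovBy a a') ∨
    (∃ a b b', p = .app a b ∧ q = .app a b' ∧ IsApp a ∧ MCovBy b b') := by
  obtain ⟨⟨hle, hne⟩, hcov⟩ := h
  cases p with
  | M => exact absurd (mle_M_eq hle).symm hne
  | var i => exact hc.elim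
  | app p1 p2 =>
    cases p1 with
    | var i => exact hc.1.elim
    | M =>
      cases p2 with
      | var i => exact hc.2.elim
      | M => exact absurd (mle_MM_eq hle).symm hne
      | app q1 q2 =>
        have hs : IsApp (MTerm.app q1 q2) := trivial
        rcases mle_Mapp_inv hle (MTerm.app q1 q2) rfl hs with ⟨s', rfl, h2⟩ | ⟨a, b, rfl, hia, h2, h3⟩
        · left
          refine ⟨_, s', rfl, rfl, hs, ⟨⟨h2, fun he => hne (by rw [he])⟩, ?_⟩⟩
          rintro z' ⟨hz1, hz2⟩ ⟨hz3, hz4⟩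
          exact hcov (.app .M z') ⟨mle_app_right _ hz1, fun he => hz2 (by injection he)⟩
            ⟨mle_app_right _ hz3, fun he => hz4 (by injection he)⟩
        · right; left
          have hab : a = MTerm.app q1 q2 ∧ b = MTerm.app q1 q2 := by
            by_contra hcon
            refine hcov (.app (.app q1 q2) (.app q1 q2))
              ⟨Relation.ReflTransGen.single (Step.mock _),
               fun he => (by injection he with e1 e2; exact (e1 ▸ hs : IsApp MTerm.M))⟩
              ⟨mle_app_app h2 h3, fun he => hcon (by injection he with e1 e2; exact ⟨e1.symm, e2.symm⟩)⟩
          obtain ⟨rfl, rfl⟩ := hab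
          exact ⟨_, rfl, rfl, hs⟩
    | app q1 q2 =>
      have ha : IsApp (MTerm.app q1 q2) := trivial
      obtain ⟨a', b', rfl, h2, h3⟩ := mle_app_inv hle (MTerm.app q1 q2) p2 rfl ha
      have hor : MTerm.app q1 q2 = a' ∨ p2 = b' := by
        by_contra hcon
        push_neg at hcon
        exact hcov (.app a' p2)
          ⟨mle_app_left _ h2, fun he => hcon.1 (by injection he)⟩
          ⟨mle_app_right _ h3, fun he => hcon.2 (by injection he)⟩
      rcases hor with he | he
      · subst he
        right; right; right
        have hne2 : p2 ≠ b' := fun he => hne (by rw [he])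
        refine ⟨_, p2, b', rfl, rfl, ha, ⟨⟨h3, hne2⟩, ?_⟩⟩
        rintro z' ⟨hz1, hz2⟩ ⟨hz3, hz4⟩
        exact hcov (.app _ z') ⟨mle_app_right _ hz1, fun he => hz2 (by injection he)⟩
          ⟨mle_app_right _ hz3, fun he => hz4 (by injection he)⟩
      · subst he
        right; right; left
        have hne2 : MTerm.app q1 q2 ≠ a' := fun he => hne (by rw [he])
        refine ⟨_, a', p2, rfl, rfl, ha, ⟨⟨h2, hne2⟩, ?_⟩⟩
        rintro z' ⟨hz1, hz2⟩ ⟨hz3, hz4⟩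
        exact hcov (.app z' p2) ⟨mle_app_left _ hz1, fun he => hz2 (by injection he)⟩
          ⟨mle_app_left _ hz3, fun he => hz4 (by injection he)⟩

/-- The statistic giving the longest-chain bound: `ml (fr t) - 1`. -/
def mdelta : MTerm → ℕ
  | .M => 0
  | .var _ => 0
  | .app .M .M => 0
  | .app .M t => 2 * mdelta t + 1
  | .app a b => mdelta a + mdelta b

/-- The statistic giving the shortest-chain bound. -/
def mnu : MTerm → ℕ
  | .M => 0
  | .var _ => 0
  | .app .M t => mnu t
  | .app a b => max (mnu a) (mnu b) + 1

lemma mdelta_Mapp {x y : MTerm} :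
    mdelta (.app .M (.app x y)) = 2 * mdelta (.app x y) + 1 := rfl

lemma mdelta_Mvar {i : ℕ} : mdelta (.app .M (.var i)) = 1 := rfl

lemma mdelta_appl {a1 a2 b : MTerm} :
    mdelta (.app (.app a1 a2) b) = mdelta (.app a1 a2) + mdelta b := rfl

lemma mdelta_varl {i : ℕ} {b : MTerm} :
    mdelta (.app (.var i) b) = mdelta b := by simp [mdelta]

lemma mnu_Mapp {t : MTerm} : mnu (.app .M t) = mnu t := rfl

lemma mnu_appl {a1 a2 b : MTerm} :
    mnu (.app (.app a1 a2) b) = max (mnu (.app a1 a2)) (mnu b) + 1 := rfl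

lemma step_mdelta {s t : MTerm} (h : Step s t) :
    mdelta t ≤ mdelta s ∧ (s ≠ t → mdelta t < mdelta s) := by
  induction h with
  | mock u =>
    cases u with
    | M => exact ⟨le_refl _, fun h => absurd rfl h⟩
    | var i => refine ⟨?_, fun _ => ?_⟩ <;> simp [mdelta]
    | app x y =>
      rw [mdelta_Mapp, mdelta_appl]
      exact ⟨by omega, fun _ => by omega⟩
  | @left a a' b hst ih =>
    have ha : IsApp a := step_src_isApp hst
    have ha' : IsApp a' := step_tgt_isApp hst
    obtain ⟨x, y, rfl⟩ : ∃ x y, a = .app x y := by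
      cases a with
      | app x y => exact ⟨x, y, rfl⟩
      | M => exact ha.elim
      | var i => exact ha.elim
    obtain ⟨x', y', rfl⟩ : ∃ x y, a' = .app x y := by
      cases a' with
      | app x y => exact ⟨x, y, rfl⟩
      | M => exact ha'.elim
      | var i => exact ha'.elim
    rw [mdelta_appl, mdelta_appl]
    refine ⟨by omega, fun hne => ?_⟩
    have : MTerm.app x y ≠ .app x' y' := fun he => hne (by rw [he])
    have := ih.2 this
    omega
  | @right a b b' hst ih =>
    have hb : IsApp b := step_src_isApp hst
    have hb' : IsApp b' := step_tgt_isApp hst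
    obtain ⟨x, y, rfl⟩ : ∃ x y, b = .app x y := by
      cases b with
      | app x y => exact ⟨x, y, rfl⟩
      | M => exact hb.elim
      | var i => exact hb.elim
    obtain ⟨x', y', rfl⟩ : ∃ x y, b' = .app x y := by
      cases b' with
      | app x y => exact ⟨x, y, rfl⟩
      | M => exact hb'.elim
      | var i => exact hb'.elim
    have hxy : MTerm.app x y ≠ .app x' y' → mdelta (MTerm.app x' y') < mdelta (.app x y) := ih.2
    cases a with
    | M =>
      rw [mdelta_Mapp, mdelta_Mapp]
      refine ⟨by omega, fun hne => ?_⟩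
      have := hxy (fun he => hne (by rw [he]))
      omega
    | var i =>
      rw [mdelta_varl, mdelta_varl]
      refine ⟨ih.1, fun hne => hxy (fun he => hne (by rw [he]))⟩
    | app c d =>
      rw [mdelta_appl, mdelta_appl]
      refine ⟨by omega, fun hne => ?_⟩
      have := hxy (fun he => hne (by rw [he]))
      omega

lemma mle_mdelta {s t : MTerm} (h : MLe s t) : mdelta t ≤ mdelta s := by
  induction h with
  | refl => exact le_refl _
  | tail _ h ih => exact le_trans (step_mdelta h).1 ih

lemma mlt_mdelta {s t : MTerm} (h : MLe s t) (hne : s ≠ t) : mdelta t < mdelta s := by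
  induction h using Relation.ReflTransGen.head_induction_on with
  | refl => exact absurd rfl hne
  | @head s u hsu hut ih =>
    by_cases he : s = u
    · subst he; exact ih hne
    · exact lt_of_le_of_lt (mle_mdelta hut) ((step_mdelta hsu).2 he)

/-- Each cover increases `mnu` by at most 1. -/
lemma mcovby_mnu {p q : MTerm} (hc : MClosed p) (h : MCovBy p q) :
    mnu q ≤ mnu p + 1 := by
  induction p generalizing q with
  | M => exact absurd h.1 not_mlt_M
  | var i => exact hc.elim
  | app p1 p2 ih1 ih2 =>
    rcases mcovby_inv hc h with
      ⟨s, s', he1, he2, hs, hcov⟩ | ⟨s, he1, he2, hs⟩ |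
      ⟨a, a', b, he1, he2, ha, hcov⟩ | ⟨a, b, b', he1, he2, ha, hcov⟩
    · injection he1 with e1 e2; subst e1; subst e2; subst he2
      rw [mnu_Mapp, mnu_Mapp]
      exact ih2 hc.2 hcov
    · injection he1 with e1 e2; subst e1; subst e2; subst he2
      obtain ⟨x, y, rfl⟩ : ∃ x y, p2 = .app x y := by
        cases p2 with
        | app x y => exact ⟨x, y, rfl⟩
        | M => exact hs.elim
        | var i => exact hs.elim
      rw [mnu_Mapp, mnu_appl]
      omega
    · injection he1 with e1 e2; subst e1; subst e2; subst he2
      have ha' : IsApp a' := mle_isApp hcov.1.1 ha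
      obtain ⟨x, y, rfl⟩ : ∃ x y, p1 = .app x y := by
        cases p1 with
        | app x y => exact ⟨x, y, rfl⟩
        | M => exact ha.elim
        | var i => exact ha.elim
      obtain ⟨x', y', rfl⟩ : ∃ x y, a' = .app x y := by
        cases a' with
        | app x y => exact ⟨x, y, rfl⟩
        | M => exact ha'.elim
        | var i => exact ha'.elim
      have := ih1 hc.1 hcov
      rw [mnu_appl, mnu_appl]
      omega
    · injection he1 with e1 e2; subst e1; subst e2; subst he2
      obtain ⟨x, y, rfl⟩ : ∃ x y, p1 = .app x y := by
        cases p1 with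
        | app x y => exact ⟨x, y, rfl⟩
        | M => exact ha.elim
        | var i => exact ha.elim
      have := ih2 hc.2 hcov
      rw [mnu_appl, mnu_appl]
      omega

end MB
namespace MB
open MTerm

lemma exists_app_of_isApp {t : MTerm} (h : IsApp t) : ∃ x y, t = .app x y := by
  cases t with
  | app x y => exact ⟨x, y, rfl⟩
  | M => exact h.elim
  | var i => exact h.elim

/-- The greatest element of `M(d)`. -/
def mtop : ℕ → MTerm
  | 0 => .M
  | 1 => .app .M .M
  | d+2 => .app (mtop (d+1)) (mtop (d+1))

lemma rTerm_closed : ∀ d, MClosed (rTerm d)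
  | 0 => trivial
  | d+1 => ⟨trivial, rTerm_closed d⟩

lemma mtop_closed : ∀ d, MClosed (mtop d)
  | 0 => trivial
  | 1 => ⟨trivial, trivial⟩
  | d+2 => ⟨mtop_closed (d+1), mtop_closed (d+1)⟩

lemma isApp_rTerm (d : ℕ) : IsApp (rTerm (d+1)) := trivial

lemma isApp_mtop : ∀ d, IsApp (mtop (d+1))
  | 0 => trivial
  | d+1 => trivial

lemma mnu_rTerm : ∀ d, mnu (rTerm d) = 0
  | 0 => rfl
  | d+1 => by rw [show rTerm (d+1) = .app .M (rTerm d) from rfl, mnu_Mapp]; exact mnu_rTerm d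

lemma mdelta_rTerm : ∀ d, mdelta (rTerm (d+1)) + 1 = 2 ^ d
  | 0 => rfl
  | d+1 => by
    have h1 : mdelta (rTerm (d+2)) = 2 * mdelta (rTerm (d+1)) + 1 := by
      show mdelta (.app .M (.app .M (rTerm d))) = _
      exact mdelta_Mapp
    have h2 := mdelta_rTerm d
    rw [h1, pow_succ]
    omega

lemma mdelta_mtop : ∀ d, mdelta (mtop (d+1)) = 0
  | 0 => rfl
  | d+1 => by
    obtain ⟨x, y, he⟩ := exists_app_of_isApp (isApp_mtop d)
    have h1 : mtop (d+2) = .app (mtop (d+1)) (mtop (d+1)) := rfl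
    rw [h1, he, mdelta_appl, ← he]
    have := mdelta_mtop d
    omega

lemma mnu_mtop : ∀ d, mnu (mtop (d+1)) = d
  | 0 => rfl
  | d+1 => by
    obtain ⟨x, y, he⟩ := exists_app_of_isApp (isApp_mtop d)
    have h1 : mtop (d+2) = .app (mtop (d+1)) (mtop (d+1)) := rfl
    rw [h1, he, mnu_appl, ← he]
    have := mnu_mtop d
    omega

lemma mle_rTerm_mtop : ∀ d, MLe (rTerm d) (mtop d)
  | 0 => Relation.ReflTransGen.refl
  | 1 => Relation.ReflTransGen.refl
  | d+2 => by
    refine Relation.ReflTransGen.trans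
      (mle_app_right _ (mle_rTerm_mtop (d+1)) :
        MLe (rTerm (d+2)) (.app .M (mtop (d+1)))) ?_
    exact Relation.ReflTransGen.single (Step.mock _)

lemma mtop_greatest : ∀ d, ∀ s, MLe (rTerm d) s → MLe s (mtop d) := by
  intro d
  induction d with
  | zero => intro s h; rw [mle_M_eq h]; exact Relation.ReflTransGen.refl
  | succ n ih =>
    cases n with
    | zero => intro s h; rw [mle_MM_eq h]; exact Relation.ReflTransGen.refl
    | succ m =>
      intro s h
      rcases mle_Mapp_inv h (rTerm (m+1)) rfl (isApp_rTerm m) with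
        ⟨s', rfl, h2⟩ | ⟨a, b, rfl, hia, h2, h3⟩
      · refine Relation.ReflTransGen.trans (mle_app_right _ (ih s' h2)) ?_
        exact Relation.ReflTransGen.single (Step.mock _)
      · exact mle_app_app (ih a h2) (ih b h3)

/-- Statistics along saturated chains. -/
lemma chain_stats : ∀ (c : List MTerm) (a : MTerm), List.Chain' MCovBy (a :: c) →
    MClosed a → ∀ b, (a :: c).getLast? = some b →
    mdelta b + c.length ≤ mdelta a ∧ mnu b ≤ mnu a + c.length := by
  intro c
  induction c with
  | nil =>
    intro a _ _ b hb
    simp only [List.getLast?_singleton, Option.some_inj] at hb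
    subst hb
    exact ⟨by simp, by simp⟩
  | cons a2 c ih =>
    intro a hch hc b hb
    rw [List.Chain', List.isChain_cons_cons] at hch
    have hcov := hch.1
    have hc2 : MClosed a2 := mle_closed hcov.1.1 hc
    have hlast : (a2 :: c).getLast? = some b := by
      rwa [List.getLast?_cons_cons] at hb
    obtain ⟨ih1, ih2⟩ := ih a2 hch.2 hc2 b hlast
    have hd : mdelta a2 < mdelta a := mlt_mdelta hcov.1.1 hcov.1.2
    have hn : mnu a2 ≤ mnu a + 1 := mcovby_mnu hc hcov
    constructor
    · simp only [List.length_cons]; omega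
    · simp only [List.length_cons]; omega

end MB
namespace MB
open MTerm

/-- Cover together with closedness of both endpoints. -/
def CCov (s t : MTerm) : Prop := MCovBy s t ∧ MClosed s ∧ MClosed t

lemma ccC_M {s t : MTerm} (h : CCov s t) : CCov (.app .M s) (.app .M t) :=
  ⟨ccov_Mapp h.2.1 h.1, ⟨trivial, h.2.1⟩, ⟨trivial, h.2.2⟩⟩

lemma ccC_left {a a' : MTerm} (h : CCov a a') {b : MTerm} (hb : MClosed b) :
    CCov (.app a b) (.app a' b) :=
  ⟨ccov_left h.2.1 h.1 b, ⟨h.2.1, hb⟩, ⟨h.2.2, hb⟩⟩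

lemma ccC_right {b b' : MTerm} (h : CCov b b') {a : MTerm} (ha : MClosed a) :
    CCov (.app a b) (.app a b') :=
  ⟨ccov_right ha h.2.1 h.1, ⟨ha, h.2.1⟩, ⟨ha, h.2.2⟩⟩

/-- The shortest maximal chain of `M(d)`. -/
def fastChain : ℕ → List MTerm
  | 0 => [.M]
  | 1 => [.app .M .M]
  | d+2 => (fastChain (d+1)).map (.app .M) ++ [mtop (d+2)]

lemma fastChain_good : ∀ d, List.Chain' CCov (fastChain (d+1)) ∧
    (fastChain (d+1)).head? = some (rTerm (d+1)) ∧
    (fastChain (d+1)).getLast? = some (mtop (d+1)) ∧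
    (fastChain (d+1)).length = d+1 := by
  intro d
  induction d with
  | zero => exact ⟨List.isChain_singleton _, rfl, rfl, rfl⟩
  | succ n ih =>
    obtain ⟨hch, hh, hl, hlen⟩ := ih
    have hmap : List.Chain' CCov ((fastChain (n+1)).map (.app .M)) :=
      (List.isChain_map _).mpr (hch.imp (fun _ _ h => ccC_M h))
    refine ⟨?_, ?_, ?_, ?_⟩
    · rw [show fastChain (n+2) = (fastChain (n+1)).map (.app .M) ++ [mtop (n+2)] from rfl,
        List.Chain', List.isChain_append]
      refine ⟨hmap, List.isChain_singleton _, ?_⟩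
      intro x hx y hy
      rw [List.getLast?_map, hl] at hx
      simp only [Option.map_some, Option.mem_def, Option.some_inj] at hx
      simp only [List.head?_cons, Option.mem_def, Option.some_inj] at hy
      subst hx; subst hy
      have : mtop (n+2) = .app (mtop (n+1)) (mtop (n+1)) := rfl
      rw [this]
      exact ⟨ccov_dup (isApp_mtop n), ⟨trivial, mtop_closed (n+1)⟩,
        ⟨mtop_closed (n+1), mtop_closed (n+1)⟩⟩
    · rw [show fastChain (n+2) = (fastChain (n+1)).map (.app .M) ++ [mtop (n+2)] from rfl,
        List.head?_append, List.head?_map, hh]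
      rfl
    · exact List.getLast?_concat
    · simp [show fastChain (n+2) = (fastChain (n+1)).map (.app .M) ++ [mtop (n+2)] from rfl,
        hlen]

/-- The longest maximal chain of `M(d)`. -/
def slowChain : ℕ → List MTerm
  | 0 => [.M]
  | 1 => [.app .M .M]
  | d+2 => rTerm (d+2) ::
      ((slowChain (d+1)).map (fun a => .app a (rTerm (d+1))) ++
       ((slowChain (d+1)).tail).map (fun b => .app (mtop (d+1)) b))

lemma slowChain_good : ∀ d, List.Chain' CCov (slowChain (d+1)) ∧
    (slowChain (d+1)).head? = some (rTerm (d+1)) ∧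
    (slowChain (d+1)).getLast? = some (mtop (d+1)) ∧
    (slowChain (d+1)).length = 2^d := by
  intro d
  induction d with
  | zero => exact ⟨List.isChain_singleton _, rfl, rfl, rfl⟩
  | succ n ih =>
    obtain ⟨hch, hh, hl, hlen⟩ := ih
    set sc := slowChain (n+1) with hsc
    have hr : MClosed (rTerm (n+1)) := rTerm_closed _
    have htc : MClosed (mtop (n+1)) := mtop_closed _
    have hL1 : List.Chain' CCov (sc.map (fun a => .app a (rTerm (n+1)))) :=
      (List.isChain_map _).mpr (hch.imp (fun _ _ h => ccC_left h hr))
    have hL2 : List.Chain' CCov (sc.tail.map (fun b => .app (mtop (n+1)) b)) :=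
      (List.isChain_map _).mpr (hch.tail.imp (fun _ _ h => ccC_right h htc))
    have hse : slowChain (n+2) = rTerm (n+2) ::
      (sc.map (fun a => .app a (rTerm (n+1))) ++
       sc.tail.map (fun b => .app (mtop (n+1)) b)) := rfl
    -- shape of sc
    obtain ⟨s0, rest, hscc⟩ : ∃ s0 rest, sc = s0 :: rest := by
      cases hsc2 : sc with
      | nil => rw [hsc2] at hh; exact absurd hh (by simp)
      | cons s0 rest => exact ⟨s0, rest, rfl⟩
    have hs0 : s0 = rTerm (n+1) := by
      rw [hscc] at hh; simpa using hh
    refine ⟨?_, ?_, ?_, ?_⟩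
    · rw [hse, List.Chain', List.isChain_cons]
      constructor
      · intro y hy
        rw [List.head?_append, List.head?_map, hscc, hs0] at hy
        simp only [List.head?_cons, Option.map_some] at hy
        have : y = MTerm.app (rTerm (n+1)) (rTerm (n+1)) := by
          exact (by simpa using hy : _ = y).symm
        subst this
        exact ⟨ccov_dup (isApp_rTerm n), ⟨trivial, hr⟩, ⟨hr, hr⟩⟩
      · rw [List.isChain_append]
        refine ⟨hL1, hL2, ?_⟩
        intro x hx y hy
        rw [List.getLast?_map, hl] at hx
        have hx' : x = MTerm.app (mtop (n+1)) (rTerm (n+1)) :=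
          (by simpa using hx : _ = x).symm
        subst hx'
        rw [List.head?_map] at hy
        cases hrest : sc.tail with
        | nil => rw [hrest] at hy; simp at hy
        | cons s1 rest2 =>
          rw [hrest] at hy
          have hy' : y = MTerm.app (mtop (n+1)) s1 :=
            (by simpa using hy : _ = y).symm
          subst hy'
          have hcov01 : CCov s0 s1 := by
            have := hch
            rw [hscc] at this
            have htl : rest = s1 :: rest2 := by
              rw [hscc] at hrest; simpa using hrest
            rw [htl, List.Chain', List.isChain_cons_cons] at this
            exact this.1
          rw [← hs0]
          exact ccC_right hcov01 htc
    · rw [hse]; rfl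
    · rw [hse, ← List.cons_append, List.getLast?_append]
      cases hrest : sc.tail with
      | nil =>
        have hrnil : rest = [] := by rw [hscc] at hrest; simpa using hrest
        subst hrnil
        have hs0top : s0 = mtop (n+1) := by
          rw [hscc] at hl; simpa using hl
        have hrt : rTerm (n+1) = mtop (n+1) := hs0.symm.trans hs0top
        rw [List.map_nil, List.getLast?_nil, Option.none_or, hscc]
        have : (rTerm (n+2) :: List.map (fun a => MTerm.app a (rTerm (n+1))) [s0]).getLast?
            = some (MTerm.app s0 (rTerm (n+1))) := rfl
        rw [this, hs0top, hrt]
        rfl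
      | cons s1 rest2 =>
        have htl : rest = s1 :: rest2 := by
          rw [hscc] at hrest; simpa using hrest
        subst htl
        have hl2 : (s1 :: rest2).getLast? = some (mtop (n+1)) := by
          rw [hscc, List.getLast?_cons_cons] at hl; exact hl
        rw [List.getLast?_map, hl2]
        rfl
    · rw [hse]
      simp only [List.length_cons, List.length_append, List.length_map, List.length_tail, hlen]
      have : 1 ≤ 2^n := Nat.one_le_two_pow
      rw [pow_succ]
      omega

end MB

/-- for `d ≥ 1`, every saturated chain of `M(d)` from `r_d` to the greatest
element has at least `d` and at most `2^(d-1)` elements, and both bounds are attained. -/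
theorem mockingbird_lattice_chain_bounds (d : ℕ) (hd : 1 ≤ d) (m : MTerm)
    (hm : MLe (rTerm d) m ∧ ∀ s, MLe (rTerm d) s → MLe s m) :
    (∀ c : List MTerm, SatChain (rTerm d) m c →
      d ≤ c.length ∧ c.length ≤ 2 ^ (d - 1)) ∧
    (∃ c : List MTerm, SatChain (rTerm d) m c ∧ c.length = d) ∧
    (∃ c : List MTerm, SatChain (rTerm d) m c ∧ c.length = 2 ^ (d - 1)) := by
  obtain ⟨n, rfl⟩ : ∃ n, d = n + 1 := ⟨d - 1, by omega⟩
  have hmtop : m = MB.mtop (n+1) :=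
    MB.mle_antisymm (MB.mtop_greatest _ m hm.1) (hm.2 _ (MB.mle_rTerm_mtop _))
  subst hmtop
  have hd1 : n + 1 - 1 = n := by omega
  rw [hd1]
  refine ⟨?_, ?_, ?_⟩
  · rintro c ⟨hch, hh, hl⟩
    cases c with
    | nil => simp at hh
    | cons a c' =>
      have ha : a = rTerm (n+1) := by simpa using hh
      subst ha
      obtain ⟨h1, h2⟩ := MB.chain_stats c' _ hch (MB.rTerm_closed _) _ hl
      rw [MB.mdelta_mtop, MB.mnu_mtop, MB.mnu_rTerm] at *
      have h3 := MB.mdelta_rTerm n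
      simp only [List.length_cons]
      omega
  · obtain ⟨hch, hh, hl, hlen⟩ := MB.fastChain_good n
    exact ⟨MB.fastChain (n+1), ⟨hch.imp (fun _ _ h => h.1), hh, hl⟩, hlen⟩
  · obtain ⟨hch, hh, hl, hlen⟩ := MB.slowChain_good n
    exact ⟨MB.slowChain (n+1), ⟨hch.imp (fun _ _ h => h.1), hh, hl⟩, hlen⟩
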